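/- arXiv:1909.11062 — 4 statements merged into one kernel-verified Lean document; each statement's English description precedes it below -/
import Mathlib

section
/- Suppose g : ℝ → ℝ is C^∞ and there exists N such that g^{(m)}(0) ≠ 0 for all m ≥ N. Then for any finite sequence of distinct positive numbers ω₁,…,ω_n, the functions λ ↦ g(ω_i λ) are linearly independent functions of λ on (0,∞). -/
noncomputable section

open Set Topology

/-- Iterated derivative of a finite sum. -/
lemma iteratedDeriv_sum_aux {ι : Type*} (s : Finset ι) (f : ι → ℝ → ℝ) (m : ℕ)
    (h : ∀ i ∈ s, ContDiff ℝ (m : ℕ∞) (f i)) (x : ℝ) :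
    iteratedDeriv m (fun t => ∑ i ∈ s, f i t) x = ∑ i ∈ s, iteratedDeriv m (f i) x := by
  have := iteratedFDeriv_sum (𝕜 := ℝ) (f := f) (u := s) (i := m) h
  simp only [iteratedDeriv_eq_iteratedFDeriv]
  have hx := congrFun this x
  simp only [Finset.sum_apply] at hx
  rw [show (fun t => ∑ i ∈ s, f i t) = (∑ j ∈ s, f j ·) from rfl, hx]
  simp [ContinuousMultilinearMap.sum_apply]

/-- if `g` is `C^∞` and there is an `N` such that `g^{(m)}(0) ≠ 0` for all
`m ≥ N`, then for any distinct positive `ω₁, …, ω_n` the functions `λ ↦ g(ω_i λ)` are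
linearly independent on `(0, ∞)`. -/
theorem stmt3 (g : ℝ → ℝ) (hg : ContDiff ℝ (⊤ : ℕ∞) g)
    (hN : ∃ N : ℕ, ∀ m : ℕ, N ≤ m → iteratedDeriv m g 0 ≠ 0) :
    ∀ (n : ℕ) (ωs : Fin n → ℝ), (∀ i, 0 < ωs i) → Function.Injective ωs →
      ∀ c : Fin n → ℝ,
        (∀ l : ℝ, 0 < l → ∑ i, c i * g (ωs i * l) = 0) → ∀ i, c i = 0 := by
  obtain ⟨N, hNprop⟩ := hN
  intro n ωs hpos hinj c hsum i
  -- the combined function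
  set F : ℝ → ℝ := fun l => ∑ j, c j * g (ωs j * l) with hF
  have hterm : ∀ j : Fin n, ContDiff ℝ (⊤ : ℕ∞) (fun l => c j * g (ωs j * l)) := by
    intro j
    exact contDiff_const.mul (hg.comp ((contDiff_const).mul contDiff_id))
  have hFc : ContDiff ℝ (⊤ : ℕ∞) F := ContDiff.sum fun j _ => hterm j
  -- all iterated derivatives of F vanish on (0,∞)
  have hvanish : ∀ m : ℕ, ∀ x ∈ Ioi (0:ℝ), iteratedDeriv m F x = 0 := by
    intro m x hx
    have hEq : Set.EqOn F (0 : ℝ → ℝ) (Ioi 0) := fun y hy => hsum y hy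
    have h1 := hEq.iteratedDeriv_of_isOpen isOpen_Ioi m hx
    have h2 : iteratedDeriv m (0 : ℝ → ℝ) x = 0 := by
      have : (0 : ℝ → ℝ) = fun _ : ℝ => (0:ℝ) := rfl
      rw [this]
      simp [iteratedDeriv_eq_iteratedFDeriv, iteratedFDeriv_zero_fun]
    rw [h1, h2]
  -- by continuity, they vanish at 0
  have hzero : ∀ m : ℕ, iteratedDeriv m F 0 = 0 := by
    intro m
    have hc1 : Continuous (iteratedDeriv m F) := hFc.continuous_iteratedDeriv m (by exact_mod_cast le_top)
    have hEq : Set.EqOn (iteratedDeriv m F) (0 : ℝ → ℝ) (Ioi 0) := fun y hy => hvanish m y hy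
    have hcl := hEq.closure hc1 continuous_const
    have h0 : (0:ℝ) ∈ closure (Ioi (0:ℝ)) := by
      rw [closure_Ioi]; exact self_mem_Ici
    simpa using hcl h0
  -- compute the iterated derivative of F at 0
  have hcomp : ∀ m : ℕ, iteratedDeriv m F 0
      = ∑ j, c j * (ωs j ^ m * iteratedDeriv m g 0) := by
    intro m
    have h1 : iteratedDeriv m F 0
        = ∑ j, iteratedDeriv m (fun l => c j * g (ωs j * l)) 0 :=
      iteratedDeriv_sum_aux Finset.univ _ m (fun j _ => (hterm j).of_le (by exact_mod_cast le_top)) 0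
    rw [h1]
    refine Finset.sum_congr rfl fun j _ => ?_
    have h2 : iteratedDeriv m (fun l => c j * g (ωs j * l)) 0
        = c j * iteratedDeriv m (fun l => g (ωs j * l)) 0 := by
      simp only [← iteratedDerivWithin_univ]
      have hf : ContDiffOn ℝ m (fun l => g (ωs j * l)) univ := by
        have : ContDiff ℝ (⊤ : ℕ∞) (fun l : ℝ => g (ωs j * l)) := by
          exact hg.comp ((contDiff_const).mul contDiff_id)
        exact (this.of_le (by exact_mod_cast le_top)).contDiffOn
      rw [iteratedDerivWithin_const_mul (mem_univ _) uniqueDiffOn_univ (c j) (hf _ (mem_univ _))]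
    rw [h2]
    have h3 := iteratedDeriv_comp_const_mul (n := m) (f := g) (hg.of_le (by exact_mod_cast le_top)) (ωs j)
    rw [congrFun h3 0]
    simp
  -- hence the power sums vanish for m ≥ N
  have hpow : ∀ m : ℕ, N ≤ m → ∑ j, (c j * ωs j ^ N) * ωs j ^ (m - N) = 0 := by
    intro m hm
    have h := hzero m
    rw [hcomp m] at h
    have hgm := hNprop m hm
    have : (∑ j, c j * ωs j ^ m) * iteratedDeriv m g 0 = 0 := by
      calc (∑ j, c j * ωs j ^ m) * iteratedDeriv m g 0
          = ∑ j, c j * (ωs j ^ m * iteratedDeriv m g 0) := by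
            rw [Finset.sum_mul]; exact Finset.sum_congr rfl fun j _ => by ring
        _ = 0 := h
    have hsum0 : ∑ j, c j * ωs j ^ m = 0 := by
      rcases mul_eq_zero.mp this with h' | h'
      · exact h'
      · exact absurd h' hgm
    rw [← hsum0]
    refine Finset.sum_congr rfl fun j _ => ?_
    rw [mul_assoc, ← pow_add, Nat.add_sub_cancel' hm]
  -- Vandermonde argument
  have hvand : (fun j => c j * ωs j ^ N) = 0 := by
    refine Matrix.eq_zero_of_forall_pow_sum_mul_pow_eq_zero hinj fun k => ?_
    have := hpow (N + (k : ℕ)) (Nat.le_add_right N k)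
    simpa [Nat.add_sub_cancel_left] using this
  have := congrFun hvand i
  simp only [Pi.zero_apply, mul_eq_zero] at this
  rcases this with h | h
  · exact h
  · exact absurd h (pow_ne_zero N (ne_of_gt (hpos i)))
end
end

section
/- For the Morlet wavelet g(ω) := e^{-ω²}(e^{ξω} − 1)², the n-th derivative at zero is g^{(n)}(0) = H_n(ξ) − 2 H_n(ξ/2) when n is odd, and g^{(n)}(0) = H_n(ξ) − 2 H_n(ξ/2) + (−1)^{n/2} n!/(n/2)! when n is even, where H_n is the n-th physicist's Hermite polynomial. -/
noncomputable section

/-- The `n`-th physicist's Hermite polynomial, via the Rodrigues formula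
`H_n(x) = (−1)^n e^{x²} (d/dx)^n e^{−x²}`. -/
def hermitePhys (n : ℕ) (x : ℝ) : ℝ :=
  (-1 : ℝ) ^ n * Real.exp (x ^ 2) * iteratedDeriv n (fun t : ℝ => Real.exp (-t ^ 2)) x

private lemma itd_cmul {n : ℕ} (c : ℝ) {f : ℝ → ℝ} (hf : ContDiff ℝ n f) (x : ℝ) :
    iteratedDeriv n (fun z => c * f z) x = c * iteratedDeriv n f x := by
  simp_rw [← iteratedDerivWithin_univ]
  exact iteratedDerivWithin_const_mul (Set.mem_univ x) uniqueDiffOn_univ c hf.contDiffWithinAt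

private lemma itd_add {n : ℕ} {f g : ℝ → ℝ} (hf : ContDiff ℝ n f) (hg : ContDiff ℝ n g)
    (x : ℝ) : iteratedDeriv n (fun z => f z + g z) x
      = iteratedDeriv n f x + iteratedDeriv n g x := by
  simp_rw [← iteratedDerivWithin_univ]
  exact iteratedDerivWithin_add (Set.mem_univ x) uniqueDiffOn_univ hf.contDiffWithinAt hg.contDiffWithinAt

private lemma contDiff_gauss (a : ℝ) :
    ContDiff ℝ (⊤ : ℕ∞) (fun ω : ℝ => Real.exp (-ω ^ 2 + a * ω)) :=
  Real.contDiff_exp.comp (((contDiff_id.pow 2).neg).add (contDiff_const.mul contDiff_id))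

/-- Key lemma: the `n`-th derivative at `0` of `ω ↦ exp(-ω² + aω)` is `H_n(a/2)`. -/
private lemma key (a : ℝ) (n : ℕ) :
    iteratedDeriv n (fun ω : ℝ => Real.exp (-ω ^ 2 + a * ω)) 0 = hermitePhys n (a / 2) := by
  have hfun : (fun ω : ℝ => Real.exp (-ω ^ 2 + a * ω))
      = fun ω : ℝ => Real.exp (a ^ 2 / 4) *
          (fun t : ℝ => Real.exp (-t ^ 2)) (ω + -(a / 2)) := by
    funext ω
    rw [← Real.exp_add]
    ring_nf
  have hg : ContDiff ℝ n (fun ω : ℝ => (fun t : ℝ => Real.exp (-t ^ 2)) (ω + -(a / 2))) := by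
    exact (Real.contDiff_exp.comp ((contDiff_id.pow 2).neg)).comp
      (contDiff_id.add contDiff_const) |>.of_le le_top
  rw [hfun, itd_cmul _ hg, iteratedDeriv_comp_add_const n (fun t : ℝ => Real.exp (-t ^ 2))]
  have hpar := iteratedDeriv_comp_neg n (fun t : ℝ => Real.exp (-t ^ 2)) (a / 2)
  have heve : (fun x : ℝ => (fun t : ℝ => Real.exp (-t ^ 2)) (-x))
      = fun t : ℝ => Real.exp (-t ^ 2) := by
    funext x; simp [neg_pow]
  rw [heve] at hpar
  beta_reduce
  have : iteratedDeriv n (fun t : ℝ => Real.exp (-t ^ 2)) (0 + -(a / 2))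
      = (-1 : ℝ) ^ n * iteratedDeriv n (fun t : ℝ => Real.exp (-t ^ 2)) (a / 2) := by
    rw [zero_add, hpar, smul_eq_mul, ← mul_assoc, ← mul_pow]
    norm_num
  rw [this, hermitePhys]
  have : Real.exp (a ^ 2 / 4) = Real.exp ((a / 2) ^ 2) := by ring_nf
  rw [this]; ring

open Polynomial in
/-- `hermitePhys` in terms of mathlib's (probabilist's) Hermite polynomial. -/
private lemma hermitePhys_eq (n : ℕ) (x : ℝ) :
    hermitePhys n x = (Real.sqrt 2) ^ n * aeval (Real.sqrt 2 * x) (hermite n) := by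
  have h2 : (0:ℝ) ≤ 2 := by norm_num
  have hs : Real.sqrt 2 ^ 2 = 2 := Real.sq_sqrt h2
  have hfun : (fun t : ℝ => Real.exp (-t ^ 2))
      = fun t : ℝ => (fun y : ℝ => Real.exp (-(y ^ 2 / 2))) (Real.sqrt 2 * t) := by
    funext t
    congr 1
    rw [mul_pow, hs]
    ring
  have hcd : ContDiff ℝ n (fun y : ℝ => Real.exp (-(y ^ 2 / 2))) := by
    exact (Real.contDiff_exp.comp (((contDiff_id.pow 2).div_const 2).neg)).of_le le_top
  rw [hermitePhys, hfun, iteratedDeriv_comp_const_mul hcd]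
  beta_reduce
  rw [iteratedDeriv_eq_iterate, Polynomial.deriv_gaussian_eq_hermite_mul_gaussian]
  have : -((Real.sqrt 2 * x) ^ 2 / 2) = -x ^ 2 := by rw [mul_pow, hs]; ring
  rw [this]
  have hee : Real.exp (x ^ 2) * Real.exp (-x ^ 2) = 1 := by rw [← Real.exp_add]; simp
  have h1 : ((-1 : ℝ)) ^ n * (-1) ^ n = 1 := by rw [← mul_pow]; norm_num
  calc (-1 : ℝ) ^ n * Real.exp (x ^ 2) * (Real.sqrt 2 ^ n *
        ((-1) ^ n * (Polynomial.aeval (Real.sqrt 2 * x)) (Polynomial.hermite n)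
          * Real.exp (-x ^ 2)))
      = ((-1 : ℝ) ^ n * (-1) ^ n) * (Real.exp (x ^ 2) * Real.exp (-x ^ 2)) *
          (Real.sqrt 2 ^ n * (Polynomial.aeval (Real.sqrt 2 * x)) (Polynomial.hermite n)) := by
        ring
    _ = Real.sqrt 2 ^ n * (Polynomial.aeval (Real.sqrt 2 * x)) (Polynomial.hermite n) := by
        rw [hee, h1]; ring

open Polynomial Nat in
private lemma hermitePhys_zero_even (m : ℕ) :
    hermitePhys (2 * m) 0 = (-1 : ℝ) ^ m * (((2 * m).factorial : ℝ) / (m.factorial : ℝ)) := by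
  rw [hermitePhys_eq, mul_zero]
  have : (aeval (0:ℝ)) (hermite (2 * m)) = ((hermite (2 * m)).coeff 0 : ℝ) := by
    rw [aeval_def, eval₂_at_zero]; rfl
  rw [this]
  have hc : (hermite (2 * m)).coeff 0 = (-1) ^ m * (2 * m - 1)‼ * Nat.choose (2 * m) 0 := by
    simpa using coeff_hermite_explicit m 0
  rw [hc]
  have hs : (Real.sqrt 2) ^ (2 * m) = 2 ^ m := by
    rw [pow_mul, Real.sq_sqrt (by norm_num : (0:ℝ) ≤ 2)]
  have hfact : ((2 * m).factorial : ℝ) = 2 ^ m * m.factorial * ((2 * m - 1)‼ : ℕ) := by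
    cases m with
    | zero => simp
    | succ k =>
      have h1 : 2 * (k + 1) = (2 * k + 1) + 1 := by ring
      have h2 : (2 * (k + 1))‼ = 2 ^ (k + 1) * (k + 1)! := Nat.doubleFactorial_two_mul (k + 1)
      have h3 : (2 * (k + 1))! = (2 * (k + 1))‼ * (2 * k + 1)‼ := by
        rw [h1]; exact Nat.factorial_eq_mul_doubleFactorial (2 * k + 1)
      have h4 : 2 * (k + 1) - 1 = 2 * k + 1 := by omega
      rw [h4, h3, h2]
      push_cast
      ring
  have hm : (m.factorial : ℝ) ≠ 0 := by positivity
  rw [hs, hfact]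
  push_cast
  field_simp
  ring
  simp

theorem hermitePhys_zero_odd (n : ℕ) (hn : Odd n) : hermitePhys n 0 = 0 := by
  rw [hermitePhys_eq, mul_zero]
  have : (Polynomial.aeval (0:ℝ)) (Polynomial.hermite n)
      = (((Polynomial.hermite n).coeff 0 : ℤ) : ℝ) := by
    rw [Polynomial.aeval_def, Polynomial.eval₂_at_zero]; rfl
  rw [this, Polynomial.coeff_hermite_of_odd_add (by simpa using hn)]
  simp

/-- derivatives at zero of the Morlet power spectrum
`g(ω) = e^{−ω²}(e^{ξω} − 1)²` in terms of physicist's Hermite polynomials. -/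
theorem stmt4 (ξ : ℝ) (n : ℕ) :
    iteratedDeriv n (fun ω : ℝ => Real.exp (-ω ^ 2) * (Real.exp (ξ * ω) - 1) ^ 2) 0
      = hermitePhys n ξ - 2 * hermitePhys n (ξ / 2)
        + (if Even n then
            (-1 : ℝ) ^ (n / 2) * ((n.factorial : ℝ) / ((n / 2).factorial : ℝ))
          else 0) := by
  have hfun : (fun ω : ℝ => Real.exp (-ω ^ 2) * (Real.exp (ξ * ω) - 1) ^ 2)
      = fun ω : ℝ => (Real.exp (-ω ^ 2 + 2 * ξ * ω)
          + (-2) * Real.exp (-ω ^ 2 + ξ * ω)) + Real.exp (-ω ^ 2 + 0 * ω) := by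
    funext ω
    have h2 : Real.exp (-ω ^ 2 + 2 * ξ * ω)
        = Real.exp (-ω ^ 2) * (Real.exp (ξ * ω) * Real.exp (ξ * ω)) := by
      rw [← Real.exp_add, ← Real.exp_add]; ring_nf
    have h1 : Real.exp (-ω ^ 2 + ξ * ω) = Real.exp (-ω ^ 2) * Real.exp (ξ * ω) := by
      rw [← Real.exp_add]
    have h0 : Real.exp (-ω ^ 2 + 0 * ω) = Real.exp (-ω ^ 2) := by ring_nf
    rw [h2, h1, h0]; ring
  have cd : ∀ a : ℝ, ContDiff ℝ n (fun ω : ℝ => Real.exp (-ω ^ 2 + a * ω)) :=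
    fun a => (contDiff_gauss a).of_le (by exact_mod_cast le_top)
  have hneg2 : ContDiff ℝ (n:ℕ∞) (fun ω : ℝ => (-2:ℝ) * Real.exp (-ω ^ 2 + ξ * ω)) :=
    contDiff_const.mul (cd ξ)
  rw [hfun, itd_add ((cd (2*ξ)).add hneg2) (cd 0),
    itd_add (cd (2*ξ)) hneg2, itd_cmul (-2:ℝ) (cd ξ), key, key, key]
  have h2ξ : 2 * ξ / 2 = ξ := by ring
  rw [h2ξ]
  rcases Nat.even_or_odd n with he | ho
  · obtain ⟨m, hm⟩ := he
    have hn2 : n / 2 = m := by omega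
    rw [if_pos ⟨m, hm⟩, hn2]
    have : (0:ℝ) / 2 = 0 := by norm_num
    rw [this]
    have hn : n = 2 * m := by omega
    rw [hn, hermitePhys_zero_even]
    ring
  · rw [if_neg (Nat.not_even_iff_odd.mpr ho)]
    have : (0:ℝ) / 2 = 0 := by norm_num
    rw [this, hermitePhys_zero_odd n ho]
    ring
end
end

section
/- Low frequency bound on wavelet invariant derivatives: if Pψ = |ψ̂|² is C^m and f ∈ L¹(ℝ), then for all λ > 0, |λ^m (Sf)^{(m)}(λ)| ≤ Ψ_m ‖f‖₁², where Ψ_m = (1/2π) Σ_{i=0}^m C(m,i)·(m!/i!)·‖ω^i (Pψ)^{(i)}(ω)‖₁. -/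
/-
Induction on `n` gives
`lⁿ ∂ⁿ_l [l⁻¹ g(ω/l)] = (-1)ⁿ ∑ᵢ C(n,i) (n!/i!) l⁻¹ (ω/l)ⁱ g⁽ⁱ⁾(ω/l)`:
differentiating the `i`-th term yields a multiple of itself and the `(i+1)`-st term, and the
coefficients obey `c(n+1,i+1) = (n+2+i) c(n,i+1) + c(n,i)`. Each term `l⁻¹ h(ω/l)` has the same
`L¹` norm as `h`, so bounding `|f̂|²` by `‖f‖₁²` gives an estimate independent of `l`.
-/

open MeasureTheory Complex

noncomputable section

/-- Fourier transform `f̂(ω) = ∫ f(x) e^{-i x ω} dx`. -/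
def fourierT (f : ℝ → ℂ) (ω : ℝ) : ℂ :=
  ∫ x : ℝ, f x * Complex.exp (-(Complex.I * (x : ℂ) * (ω : ℂ)))

/-- Power spectrum `(Pψ)(ω) = |ψ̂(ω)|²`. -/
def powerSpec (ψ : ℝ → ℂ) (ω : ℝ) : ℝ := ‖fourierT ψ ω‖ ^ 2

open Finset
open scoped Nat

lemma norm_fourierT_le (f : ℝ → ℂ) (ω : ℝ) : ‖fourierT f ω‖ ≤ ∫ x, ‖f x‖ := by
  refine (norm_integral_le_integral_norm _).trans_eq (integral_congr_ae <| .of_forall fun x => ?_)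
  simp [Complex.norm_exp]

def dilationCoeff (n i : ℕ) : ℝ := (n.choose i : ℝ) * ((n ! : ℝ) / (i ! : ℝ))

lemma dilationCoeff_nonneg (n i : ℕ) : 0 ≤ dilationCoeff n i := by
  unfold dilationCoeff; positivity

lemma dilationCoeff_of_lt {n i : ℕ} (h : n < i) : dilationCoeff n i = 0 := by
  simp [dilationCoeff, Nat.choose_eq_zero_of_lt h]

lemma dilationCoeff_succ_zero (n : ℕ) : dilationCoeff (n + 1) 0 = (n + 1) * dilationCoeff n 0 := by
  simp [dilationCoeff, Nat.factorial_succ]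

lemma dilationCoeff_succ_succ (n i : ℕ) :
    dilationCoeff (n + 1) (i + 1) = (n + 2 + i) * dilationCoeff n (i + 1) + dilationCoeff n i := by
  have pascal : ((n + 1).choose (i + 1) : ℝ) = n.choose i + n.choose (i + 1) := by
    exact_mod_cast Nat.choose_succ_succ n i
  have absorb : ((n.choose (i + 1) : ℝ)) * (i + 1) = n.choose i * (n - i) := by
    rcases le_or_gt i n with h | h
    · rw [← Nat.cast_sub h]; exact_mod_cast Nat.choose_succ_right_eq n i
    · simp [Nat.choose_eq_zero_of_lt h, Nat.choose_eq_zero_of_lt (h.trans (Nat.lt_succ_self i))]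
  simp only [dilationCoeff, Nat.factorial_succ]
  push_cast
  field_simp
  linear_combination (n + 1 : ℝ) * pascal - absorb

lemma sum_dilationCoeff_succ (n : ℕ) (B : ℕ → ℝ) :
    ∑ i ∈ range (n + 1), ((n + 1 + i) * dilationCoeff n i * B i + dilationCoeff n i * B (i + 1))
      = ∑ i ∈ range (n + 2), dilationCoeff (n + 1) i * B i := by
  have hsplit : ∑ i ∈ range n, (n + 1 + ((i + 1 : ℕ) : ℝ)) * dilationCoeff n (i + 1) * B (i + 1)
        + ∑ i ∈ range n, dilationCoeff n i * B (i + 1)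
      = ∑ i ∈ range n, ((n + 2 + i) * dilationCoeff n (i + 1) + dilationCoeff n i) * B (i + 1) := by
    rw [← sum_add_distrib]
    exact sum_congr rfl fun i _ => by push_cast; ring
  rw [sum_range_succ' _ (n + 1), sum_add_distrib, sum_range_succ' _ n,
    sum_range_succ (fun i => dilationCoeff n i * B (i + 1)), sum_range_succ _ n]
  simp only [dilationCoeff_succ_succ, dilationCoeff_succ_zero, dilationCoeff_of_lt n.lt_succ_self]
  linear_combination hsplit

def dilationTerm (g : ℝ → ℝ) (ω : ℝ) (n i : ℕ) (s : ℝ) : ℝ :=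
  ω ^ i * iteratedDeriv i g (ω / s) / s ^ (n + i + 1)

lemma hasDerivAt_dilationTerm {g : ℝ → ℝ} {ω l : ℝ} (hl : l ≠ 0) (n : ℕ) {i : ℕ}
    (hg : DifferentiableAt ℝ (iteratedDeriv i g) (ω / l)) :
    HasDerivAt (dilationTerm g ω n i)
      (-((n + i + 1) * dilationTerm g ω (n + 1) i l + dilationTerm g ω (n + 1) (i + 1) l)) l := by
  have hinner : HasDerivAt (fun s => ω / s) (-(ω / l ^ 2)) l := by
    simpa [div_eq_mul_inv] using (hasDerivAt_inv hl).const_mul ω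
  have houter : HasDerivAt (iteratedDeriv i g) (iteratedDeriv (i + 1) g (ω / l)) (ω / l) := by
    simpa [iteratedDeriv_succ] using hg.hasDerivAt
  refine (((houter.comp l hinner).const_mul (ω ^ i)).fun_div (hasDerivAt_pow (n + i + 1) l)
    (pow_ne_zero _ hl)).congr_deriv ?_
  simp only [dilationTerm, Function.comp_apply, Nat.add_sub_cancel]
  field_simp
  push_cast
  ring

theorem iteratedDeriv_inv_mul_comp_div {g : ℝ → ℝ} {n : ℕ} (hg : ContDiff ℝ n g) (ω : ℝ)
    {l : ℝ} (hl : l ≠ 0) :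
    iteratedDeriv n (fun s => s⁻¹ * g (ω / s)) l
      = (-1) ^ n * ∑ i ∈ range (n + 1), dilationCoeff n i * dilationTerm g ω n i l := by
  induction n generalizing l with
  | zero => simp [dilationCoeff, dilationTerm, div_eq_inv_mul]
  | succ n ih =>
    have hg' : ContDiff ℝ n g := hg.of_le (by exact_mod_cast n.le_succ)
    have hev : iteratedDeriv n (fun s => s⁻¹ * g (ω / s)) =ᶠ[nhds l]
        fun s => (-1) ^ n * ∑ i ∈ range (n + 1), dilationCoeff n i * dilationTerm g ω n i s :=
      Filter.eventually_of_mem (isOpen_ne.mem_nhds hl) fun s hs => ih hg' hs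
    have hterm : ∀ i ∈ range (n + 1),
        HasDerivAt (fun s => dilationCoeff n i * dilationTerm g ω n i s)
          (dilationCoeff n i * -((n + i + 1) * dilationTerm g ω (n + 1) i l
            + dilationTerm g ω (n + 1) (i + 1) l)) l := fun i hi =>
      (hasDerivAt_dilationTerm hl n (hg.differentiable_iteratedDeriv i
        (by exact_mod_cast mem_range.1 hi) _)).const_mul _
    rw [iteratedDeriv_succ, hev.deriv_eq, ((HasDerivAt.fun_sum hterm).const_mul _).deriv,
      ← sum_dilationCoeff_succ, pow_succ, mul_assoc, neg_one_mul, ← sum_neg_distrib]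
    exact congrArg _ (sum_congr rfl fun i _ => by ring)

theorem pow_mul_iteratedDeriv_inv_mul_comp_div {g : ℝ → ℝ} {n : ℕ} (hg : ContDiff ℝ n g)
    (ω : ℝ) {l : ℝ} (hl : l ≠ 0) :
    l ^ n * iteratedDeriv n (fun s => s⁻¹ * g (ω / s)) l
      = (-1) ^ n * ∑ i ∈ range (n + 1),
          dilationCoeff n i * (l⁻¹ * ((ω / l) ^ i * iteratedDeriv i g (ω / l))) := by
  rw [iteratedDeriv_inv_mul_comp_div hg ω hl, mul_left_comm, mul_sum]
  refine congrArg _ (sum_congr rfl fun i _ => ?_)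
  simp only [dilationTerm, div_pow]
  field_simp
  ring

def dilationMajorant (g : ℝ → ℝ) (n : ℕ) (l ω : ℝ) : ℝ :=
  ∑ i ∈ range (n + 1), dilationCoeff n i * |l⁻¹ * ((ω / l) ^ i * iteratedDeriv i g (ω / l))|

lemma abs_pow_mul_iteratedDeriv_le_dilationMajorant {g : ℝ → ℝ} {n : ℕ} (hg : ContDiff ℝ n g)
    (ω : ℝ) {l : ℝ} (hl : l ≠ 0) :
    |l ^ n * iteratedDeriv n (fun s => s⁻¹ * g (ω / s)) l| ≤ dilationMajorant g n l ω := by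
  rw [pow_mul_iteratedDeriv_inv_mul_comp_div hg ω hl, abs_mul, abs_pow, abs_neg, abs_one, one_pow,
    one_mul]
  refine (abs_sum_le_sum_abs _ _).trans_eq (sum_congr rfl fun i _ => ?_)
  rw [abs_mul, abs_of_nonneg (dilationCoeff_nonneg n i)]

lemma integral_abs_inv_mul_comp_div (h : ℝ → ℝ) {l : ℝ} (hl : 0 < l) :
    ∫ ω, |l⁻¹ * h (ω / l)| = ∫ ω, |h ω| := by
  simp_rw [abs_mul, abs_inv, abs_of_pos hl]
  rw [integral_const_mul, Measure.integral_comp_div (fun u => |h u|), abs_of_pos hl, smul_eq_mul,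
    inv_mul_cancel_left₀ hl.ne']

lemma MeasureTheory.Integrable.abs_inv_mul_comp_div {h : ℝ → ℝ} (hh : Integrable h) {l : ℝ}
    (hl : l ≠ 0) :
    Integrable fun ω => |l⁻¹ * h (ω / l)| :=
  ((hh.comp_div hl).const_mul l⁻¹).abs

section Majorant

variable {g : ℝ → ℝ} {n : ℕ} {l : ℝ}
  (hint : ∀ i ≤ n, Integrable (fun ω : ℝ => ω ^ i * iteratedDeriv i g ω))
include hint

lemma integrable_dilationMajorant (hl : l ≠ 0) : Integrable (dilationMajorant g n l) :=
  integrable_finsetSum _ fun i hi =>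
    ((hint i (mem_range_succ_iff.1 hi)).abs_inv_mul_comp_div hl).const_mul _

lemma integral_dilationMajorant (hl : 0 < l) :
    ∫ ω, dilationMajorant g n l ω
      = ∑ i ∈ range (n + 1), dilationCoeff n i * ∫ ω, |ω ^ i * iteratedDeriv i g ω| := by
  unfold dilationMajorant
  rw [integral_finsetSum _ fun i hi =>
    ((hint i (mem_range_succ_iff.1 hi)).abs_inv_mul_comp_div hl.ne').const_mul _]
  refine sum_congr rfl fun i _ => ?_
  rw [integral_const_mul,
    integral_abs_inv_mul_comp_div (fun u => u ^ i * iteratedDeriv i g u) hl]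

end Majorant

lemma abs_integral_sq_norm_fourierT_mul_le (f : ℝ → ℂ) {K G : ℝ → ℝ} (hG : Integrable G)
    (hK : ∀ ω, |K ω| ≤ G ω) :
    |∫ ω, ‖fourierT f ω‖ ^ 2 * K ω| ≤ (∫ x, ‖f x‖) ^ 2 * ∫ ω, G ω := by
  rw [← integral_const_mul ((∫ x, ‖f x‖) ^ 2), ← Real.norm_eq_abs]
  refine norm_integral_le_of_norm_le (hG.const_mul _) (.of_forall fun ω => ?_)
  rw [Real.norm_eq_abs, abs_mul, abs_of_nonneg (sq_nonneg _)]
  exact mul_le_mul (pow_le_pow_left₀ (norm_nonneg _) (norm_fourierT_le f ω) 2) (hK ω)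
    (abs_nonneg _) (sq_nonneg _)

theorem stmt10_general (ψ : ℝ → ℂ) (m : ℕ) (hψ : ContDiff ℝ m (powerSpec ψ))
    (hint : ∀ i ≤ m, Integrable (fun ω : ℝ => ω ^ i * iteratedDeriv i (powerSpec ψ) ω))
    (f : ℝ → ℝ) :
    ∀ l : ℝ, 0 < l →
      |l ^ m * ((1 / (2 * Real.pi)) * ∫ ω : ℝ, ‖fourierT (fun x => (f x : ℂ)) ω‖ ^ 2 *
          iteratedDeriv m (fun s : ℝ => s⁻¹ * powerSpec ψ (ω / s)) l)|
        ≤ ((1 / (2 * Real.pi)) * ∑ i ∈ Finset.range (m + 1),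
              (m.choose i : ℝ) * ((m.factorial : ℝ) / (i.factorial : ℝ)) *
                ∫ ω : ℝ, |ω ^ i * iteratedDeriv i (powerSpec ψ) ω|)
          * (∫ x : ℝ, |f x|) ^ 2 := by
  intro l hl
  have hbound := abs_integral_sq_norm_fourierT_mul_le (fun x => (f x : ℂ))
    (integrable_dilationMajorant hint hl.ne')
    fun ω => abs_pow_mul_iteratedDeriv_le_dilationMajorant hψ ω hl.ne'
  simp only [Complex.norm_real, Real.norm_eq_abs, integral_dilationMajorant hint hl] at hbound
  calc _ = 1 / (2 * Real.pi) * |∫ ω, ‖fourierT (fun x => (f x : ℂ)) ω‖ ^ 2 *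
          (l ^ m * iteratedDeriv m (fun s : ℝ => s⁻¹ * powerSpec ψ (ω / s)) l)| := by
        simp_rw [mul_left_comm _ (l ^ m)]
        rw [integral_const_mul, mul_left_comm, abs_mul,
          abs_of_nonneg (by positivity : (0 : ℝ) ≤ 1 / (2 * Real.pi))]
    _ ≤ _ := by
        grw [hbound]
        simp only [dilationCoeff, mul_sum, sum_mul]
        exact le_of_eq (sum_congr rfl fun i _ => by ring)

/-- STATEMENT 10, low frequency bound on wavelet invariant derivatives:
if `Pψ ∈ C^m` and `f ∈ L¹`, then for all `λ > 0`,
`|λ^m (Sf)^{(m)}(λ)| ≤ Ψ_m ‖f‖₁²`, where `|ψ̂_λ(ω)|² = λ⁻¹(Pψ)(ω/λ)`,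
`(Sf)^{(m)}(λ) = (1/2π)∫ |f̂(ω)|² (d^m/dλ^m)|ψ̂_λ(ω)|² dω` and
`Ψ_m = (1/2π) Σ_{i=0}^m C(m,i)(m!/i!) ‖ω^i (Pψ)^{(i)}(ω)‖₁`. -/
theorem stmt10 (ψ : ℝ → ℂ) (m : ℕ) (hψ : ContDiff ℝ m (powerSpec ψ))
    (hint : ∀ i ≤ m, Integrable (fun ω : ℝ => ω ^ i * iteratedDeriv i (powerSpec ψ) ω))
    (f : ℝ → ℝ) (hf : Integrable f) :
    ∀ l : ℝ, 0 < l →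
      |l ^ m * ((1 / (2 * Real.pi)) * ∫ ω : ℝ, ‖fourierT (fun x => (f x : ℂ)) ω‖ ^ 2 *
          iteratedDeriv m (fun s : ℝ => s⁻¹ * powerSpec ψ (ω / s)) l)|
        ≤ ((1 / (2 * Real.pi)) * ∑ i ∈ Finset.range (m + 1),
              (m.choose i : ℝ) * ((m.factorial : ℝ) / (i.factorial : ℝ)) *
                ∫ ω : ℝ, |ω ^ i * iteratedDeriv i (powerSpec ψ) ω|)
          * (∫ x : ℝ, |f x|) ^ 2 :=
  stmt10_general ψ m hψ hint f

end
end

section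
/- Taylor unbiasing bias bound: let L ∈ C^{k+2}(0,∞) (k ≥ 2 even), let τ be a bounded symmetric random variable with E[τ] = 0, E[τ²] = η², |τ| ≤ 1/2, and E[τ^i] = C_i η^i. Suppose |λ^i L^{(i)}(λ)| ≤ Λ_i(λ) for 0 ≤ i ≤ k+2 and Λ_{k+2}((1−τ)λ)/Λ_{k+2}(λ) ≤ R(λ). Define F_λ(τ) = L((1−τ)λ), and G_λ(τ) = F_λ(τ) − B₂η²F_λ''(τ) − B₄η⁴F_λ^{(4)}(τ) − ⋯ − B_k η^k F_λ^{(k)}(τ), where the constants B_i satisfy the recursion C_i/i! − B₂C_{i−2}/(i−2)! − ⋯ − B_{i−2}C₂/2! − B_i = 0 for i = 2,4,…,k. Then |E[G_λ(τ)] − L(λ)| ≲ k R(λ) Λ_{k+2}(λ)(2Eη)^{k+2}, where E = max over relevant indices of (T^j |B_i|/j!)^{1/(i+j)} with T = max_i C_i^{1/i}. -/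
/-!
Expand each `F^{(2j)}(τ)` in its Taylor polynomial at `0` of degree `< k + 2 - 2j`, with Lagrange
remainder. In expectation the odd moments vanish, and regrouping the polynomial parts by the total
order `2i` of the derivative `F^{(2i)}(0)` shows that its coefficient is `η^{2i}` times
`C_{2i}/(2i)! - Σ_{0<j<i} B_{2j} C_{2i-2j}/(2i-2j)! - B_{2i}`, which is `0` for `i ≥ 1` by the
recursion; only `F(0) = L(λ)` survives. The `j`-th remainder is at most
`sup |F^{(k+2)}| C_n η^n / n!` with `n = k + 2 - 2j`, and after the weight `|B_{2j}| η^{2j}` the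
choice of `T` and `E` bounds it by `sup |F^{(k+2)}| (Eη)^{k+2}`. Finally
`F^{(k+2)}(τ) = λ^{k+2} L^{(k+2)}((1-τ)λ)` and `1 - τ ≥ 1/2` give
`sup |F^{(k+2)}| ≤ 2^{k+2} R(λ) Λ_{k+2}(λ)`; there are `k/2 + 1 ≤ k` terms, so `c = 1` works.
-/

open MeasureTheory Finset Set
open scoped Nat

noncomputable section

theorem iteratedDeriv_iteratedDeriv {𝕜 F : Type*} [NontriviallyNormedField 𝕜]
    [NormedAddCommGroup F] [NormedSpace 𝕜 F] (m n : ℕ) (f : 𝕜 → F) :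
    iteratedDeriv m (iteratedDeriv n f) = iteratedDeriv (n + m) f := by
  rw [iteratedDeriv_eq_iterate, iteratedDeriv_eq_iterate, iteratedDeriv_eq_iterate, add_comm,
    Function.iterate_add_apply]

theorem ContDiffOn.iteratedDeriv_of_isOpen {𝕜 F : Type*} [NontriviallyNormedField 𝕜]
    [NormedAddCommGroup F] [NormedSpace 𝕜 F] {f : 𝕜 → F} {s : Set 𝕜} (hs : IsOpen s)
    {n m : ℕ} (hf : ContDiffOn 𝕜 (n + m : ℕ) f s) : ContDiffOn 𝕜 m (iteratedDeriv n f) s := by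
  induction n generalizing m with
  | zero => simpa using hf
  | succ n ih =>
    rw [iteratedDeriv_succ]
    exact (ih (m := m + 1) (by rwa [← add_assoc, add_right_comm])).deriv_of_isOpen hs
      (by norm_cast)

theorem abs_sub_taylor_le {f : ℝ → ℝ} {s : Set ℝ} (hs : IsOpen s) {n : ℕ}
    (hf : ContDiffOn ℝ n f s) {x₀ x M : ℝ} (hx : uIcc x₀ x ⊆ s)
    (hM : ∀ y ∈ uIcc x₀ x, |iteratedDeriv n f y| ≤ M) :
    |f x - ∑ m ∈ range n, iteratedDeriv m f x₀ / m ! * (x - x₀) ^ m|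
      ≤ M * |x - x₀| ^ n / n ! := by
  cases n with
  | zero => simpa using hM x right_mem_uIcc
  | succ n =>
  rcases eq_or_ne x₀ x with rfl | hne
  · simp [sum_range_succ']
  obtain ⟨x', hx', hrem⟩ := taylor_mean_remainder_lagrange_iteratedDeriv hne (hf.mono hx)
  have htaylor : taylorWithinEval f n (uIcc x₀ x) x₀ x
      = ∑ m ∈ range (n + 1), iteratedDeriv m f x₀ / m ! * (x - x₀) ^ m := by
    rw [taylor_within_apply]
    refine sum_congr rfl fun m hm => ?_
    rw [iteratedDerivWithin_eq_iteratedDeriv (uniqueDiffOn_uIcc hne)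
      ((hf.contDiffAt (hs.mem_nhds (hx left_mem_uIcc))).of_le ?_) left_mem_uIcc, smul_eq_mul]
    · ring
    · exact_mod_cast (mem_range.1 hm).le
  rw [← htaylor, hrem, abs_div, abs_mul, abs_pow, Nat.abs_cast]
  gcongr
  exact hM x' (uIoo_subset_uIcc_self hx')

theorem iteratedDeriv_comp_one_sub_mul {f : ℝ → ℝ} {n : ℕ} (hf : ContDiffOn ℝ n f (Ioi 0))
    {c t : ℝ} (hc : 0 < c) (ht : t < 1) :
    iteratedDeriv n (fun s => f ((1 - s) * c)) t = (-c) ^ n * iteratedDeriv n f ((1 - t) * c) := by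
  have hscale : ∀ x ∈ Ioi (0 : ℝ),
      iteratedDeriv n (fun x => f (c * x)) x = c ^ n * iteratedDeriv n f (c * x) := by
    intro x hx
    have hmaps : MapsTo (c * ·) (Ioi (0 : ℝ)) (Ioi 0) := fun y hy => mul_pos hc hy
    rw [← iteratedDerivWithin_of_isOpen isOpen_Ioi hx,
      iteratedDerivWithin_comp_const_smul hx (uniqueDiffOn_Ioi 0) hf c hmaps, smul_eq_mul,
      iteratedDerivWithin_of_isOpen isOpen_Ioi (hmaps hx)]
  have hcomp : (fun s => f ((1 - s) * c)) = fun s => (fun x => f (c * x)) (1 - s) := by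
    simp only [mul_comm]
  rw [hcomp, congrFun (iteratedDeriv_comp_const_sub n (fun x => f (c * x)) 1) t,
    hscale (1 - t) (by simpa using ht), smul_eq_mul, mul_comm c, neg_pow c]
  ring

theorem abs_iteratedDeriv_comp_one_sub_mul_le {f : ℝ → ℝ} {n : ℕ}
    (hf : ContDiffOn ℝ n f (Ioi 0)) {c : ℝ} (hc : 0 < c) {Λ : ℝ → ℝ}
    (hΛ : ∀ μ : ℝ, 0 < μ → |μ ^ n * iteratedDeriv n f μ| ≤ Λ μ) {y : ℝ} (hy : |y| ≤ 1 / 2) :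
    |iteratedDeriv n (fun s => f ((1 - s) * c)) y| ≤ 2 ^ n * Λ ((1 - y) * c) := by
  obtain ⟨hy₁, hy₂⟩ := abs_le.1 hy
  have h1y : 1 / 2 ≤ 1 - y := by linarith
  rw [iteratedDeriv_comp_one_sub_mul hf hc (by linarith), abs_mul, abs_pow, abs_neg,
    abs_of_pos hc]
  calc c ^ n * |iteratedDeriv n f ((1 - y) * c)|
      ≤ (2 * (1 - y)) ^ n * c ^ n * |iteratedDeriv n f ((1 - y) * c)| := by
        gcongr
        exact le_mul_of_one_le_left (by positivity) (one_le_pow₀ (by linarith))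
    _ = 2 ^ n * |((1 - y) * c) ^ n * iteratedDeriv n f ((1 - y) * c)| := by
        rw [abs_mul, abs_of_nonneg (by positivity : (0 : ℝ) ≤ ((1 - y) * c) ^ n), mul_pow,
          mul_pow]
        ring
    _ ≤ 2 ^ n * Λ ((1 - y) * c) := by
        gcongr
        exact hΛ _ (mul_pos (by linarith) hc)

theorem sum_range_two_mul_of_odd_eq_zero {M : Type*} [AddCommMonoid M] (n : ℕ) (g : ℕ → M)
    (hg : ∀ m < 2 * n, Odd m → g m = 0) :
    ∑ m ∈ range (2 * n), g m = ∑ p ∈ range n, g (2 * p) := by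
  induction n with
  | zero => simp
  | succ n ih =>
    rw [show 2 * (n + 1) = 2 * n + 1 + 1 by ring, sum_range_succ, sum_range_succ, sum_range_succ,
      ih fun m hm => hg m (by omega), hg (2 * n + 1) (by omega) (odd_two_mul_add_one n), add_zero]

/-- The estimator is `G = ∑ j ≤ k/2, unbiasingWeight B j * η ^ (2 * j) * F^{(2j)}`. -/
def unbiasingWeight (B : ℕ → ℝ) (j : ℕ) : ℝ := if j = 0 then 1 else -B (2 * j)

theorem abs_unbiasingWeight {B : ℕ → ℝ} (hB0 : B 0 = 1) (j : ℕ) :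
    |unbiasingWeight B j| = |B (2 * j)| := by
  unfold unbiasingWeight
  split_ifs with hj <;> simp [hj, hB0]

theorem sub_sum_Icc_eq_sum_unbiasingWeight (B : ℕ → ℝ) (η : ℝ) (K : ℕ) (F : ℝ → ℝ) (x : ℝ) :
    F x - ∑ j ∈ Icc 1 K, B (2 * j) * η ^ (2 * j) * iteratedDeriv (2 * j) F x
      = ∑ j ∈ range (K + 1), unbiasingWeight B j * η ^ (2 * j) * iteratedDeriv (2 * j) F x := by
  rw [range_eq_Ico, sum_eq_sum_Ico_succ_bot (by omega : 0 < K + 1), zero_add,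
    Finset.Ico_add_one_right_eq_Icc, sub_eq_add_neg, ← sum_neg_distrib]
  congr 1
  · simp [unbiasingWeight]
  · refine sum_congr rfl fun j hj => ?_
    rw [unbiasingWeight, if_neg (by simp at hj; omega)]
    ring

/-- The paper's recursion for `B₂, B₄, …, B_k`, with `k = 2 * K`. -/
def UnbiasingRecursion (K : ℕ) (C B : ℕ → ℝ) : Prop :=
  ∀ i, Even i → 2 ≤ i → i ≤ 2 * K →
    C i / (i.factorial : ℝ)
      - (∑ j ∈ Finset.Ico 1 (i / 2), B (2 * j) * C (i - 2 * j) / ((i - 2 * j).factorial : ℝ))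
      - B i = 0

section UnbiasingWeights

variable {K : ℕ} {C B : ℕ → ℝ}

theorem sum_unbiasingWeight_mul_eq_zero (hC0 : C 0 = 1) (hrec : UnbiasingRecursion K C B)
    {i : ℕ} (hi : 1 ≤ i) (hiK : i ≤ K) :
    ∑ j ∈ range (i + 1), unbiasingWeight B j * (C (2 * (i - j)) / (2 * (i - j))!) = 0 := by
  have h := hrec (2 * i) (even_two_mul i) (by omega) (by omega)
  rw [Nat.mul_div_cancel_left i two_pos] at h
  rw [sum_range_succ, range_eq_Ico, sum_eq_sum_Ico_succ_bot hi, zero_add]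
  have hmid : ∑ j ∈ Ico 1 i, unbiasingWeight B j * (C (2 * (i - j)) / (2 * (i - j))!)
      = -∑ j ∈ Ico 1 i, B (2 * j) * C (2 * i - 2 * j) / (2 * i - 2 * j)! := by
    rw [← sum_neg_distrib]
    refine sum_congr rfl fun j hj => ?_
    rw [unbiasingWeight, if_neg (by simp at hj; omega), Nat.mul_sub]
    ring
  rw [hmid]
  simp only [unbiasingWeight, if_pos, if_neg (show i ≠ 0 by omega), Nat.sub_self,
    Nat.sub_zero, mul_zero, hC0]
  linear_combination h

theorem sum_unbiasingWeight_mul_sum_eq (hC0 : C 0 = 1) (hrec : UnbiasingRecursion K C B)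
    (η : ℝ) (D : ℕ → ℝ) :
    ∑ j ∈ range (K + 1), unbiasingWeight B j * η ^ (2 * j) *
        ∑ p ∈ range (K + 1 - j), D (2 * (j + p)) * (C (2 * p) / (2 * p)!) * η ^ (2 * p)
      = D 0 := by
  set c : ℕ → ℝ := fun p => C (2 * p) / (2 * p)!
  calc _ = ∑ j ∈ range (K + 1), ∑ p ∈ range (K + 1 - j),
          η ^ (2 * (j + p)) * D (2 * (j + p)) * (unbiasingWeight B j * c p) := by
        refine sum_congr rfl fun j _ => ?_
        rw [mul_sum]
        refine sum_congr rfl fun p _ => ?_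
        rw [mul_add, pow_add]
        ring
    _ = ∑ i ∈ range (K + 1), η ^ (2 * i) * D (2 * i) *
          ∑ j ∈ range (i + 1), unbiasingWeight B j * c (i - j) := by
        rw [← sum_range_diag_flip]
        refine sum_congr rfl fun i _ => ?_
        rw [mul_sum]
        refine sum_congr rfl fun j hj => ?_
        rw [Nat.add_sub_cancel' (Nat.lt_succ_iff.1 (mem_range.1 hj))]
    _ = ∑ i ∈ range (K + 1), if i = 0 then D 0 else 0 := by
        refine sum_congr rfl fun i hi => ?_
        split_ifs with h0
        · simp [h0, unbiasingWeight, c, hC0]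
        · rw [sum_unbiasingWeight_mul_eq_zero hC0 hrec (by omega) (by simp at hi; omega),
            mul_zero]
    _ = D 0 := by simp

theorem abs_unbiasingWeight_mul_le {η T E : ℝ} (hη : 0 ≤ η) (hB0 : B 0 = 1)
    (hCT : ∀ i, i ≤ 2 * K + 2 → Even i → C i ≤ T ^ i)
    (hBE : ∀ i, i ≤ 2 * K → Even i → ∀ j, j ≤ 2 * K + 2 - i →
      T ^ j / (j.factorial : ℝ) * |B i| ≤ E ^ (i + j))
    {j : ℕ} (hj : j ≤ K) :
    |unbiasingWeight B j| * η ^ (2 * j) * (C (2 * (K + 1 - j)) / (2 * (K + 1 - j))!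
        * η ^ (2 * (K + 1 - j)))
      ≤ (E * η) ^ (2 * K + 2) := by
  have hsplit : 2 * j + 2 * (K + 1 - j) = 2 * K + 2 := by omega
  have hC := hCT (2 * (K + 1 - j)) (by omega) (even_two_mul _)
  have hB := hBE (2 * j) (by omega) (even_two_mul j) (2 * (K + 1 - j)) (by omega)
  rw [hsplit] at hB
  rw [abs_unbiasingWeight hB0]
  calc |B (2 * j)| * η ^ (2 * j) * (C (2 * (K + 1 - j)) / (2 * (K + 1 - j))!
        * η ^ (2 * (K + 1 - j)))
      ≤ |B (2 * j)| * η ^ (2 * j) * (T ^ (2 * (K + 1 - j)) / (2 * (K + 1 - j))!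
        * η ^ (2 * (K + 1 - j))) := by gcongr
    _ = T ^ (2 * (K + 1 - j)) / (2 * (K + 1 - j))! * |B (2 * j)| * η ^ (2 * K + 2) := by
        rw [← hsplit, pow_add]
        ring
    _ ≤ (E * η) ^ (2 * K + 2) := by
        rw [mul_pow]
        gcongr

end UnbiasingWeights

theorem integrable_comp_of_continuousOn {Ω : Type*} [MeasurableSpace Ω] {μ : Measure Ω}
    [IsFiniteMeasure μ] {g : ℝ → ℝ} {K : Set ℝ} (hK : IsCompact K) (hg : ContinuousOn g K)
    {X : Ω → ℝ} (hX : Measurable X) (hXK : ∀ ω, X ω ∈ K) : Integrable (fun ω => g (X ω)) μ := by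
  obtain ⟨c, hc⟩ := hK.exists_bound_of_continuousOn hg
  refine .of_bound ?_ c (.of_forall fun ω => hc _ (hXK ω))
  exact ((continuousOn_iff_continuous_domRestrict.mp hg).measurable.comp
    (hX.subtype_mk (h := hXK))).aestronglyMeasurable

section Expectation

variable {Ω : Type*} [MeasurableSpace Ω] {μ : Measure Ω} [IsFiniteMeasure μ] {τ : Ω → ℝ}

theorem integrable_comp_of_abs_le_half {g : ℝ → ℝ}
    (hg : ContinuousOn g (Set.Icc (-(1 / 2)) (1 / 2))) (hτ : Measurable τ)
    (hτb : ∀ ω, |τ ω| ≤ 1 / 2) : Integrable (fun ω => g (τ ω)) μ :=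
  integrable_comp_of_continuousOn isCompact_Icc hg hτ fun ω => abs_le.1 (hτb ω)

theorem integral_sum_mul_pow (hτ : Measurable τ) (hτb : ∀ ω, |τ ω| ≤ 1 / 2) (a : ℕ → ℝ)
    (n : ℕ) : ∫ ω, ∑ m ∈ range n, a m * τ ω ^ m ∂μ = ∑ m ∈ range n, a m * ∫ ω, τ ω ^ m ∂μ := by
  rw [integral_finsetSum _ fun m _ =>
    (integrable_comp_of_abs_le_half (continuous_pow m).continuousOn hτ hτb).const_mul (a m)]
  simp only [integral_const_mul]

def meanTaylorRemainder (μ : Measure Ω) (τ : Ω → ℝ) (F : ℝ → ℝ) (j n : ℕ) : ℝ :=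
  ∫ ω, iteratedDeriv j F (τ ω) ∂μ
    - ∑ m ∈ range n, iteratedDeriv (j + m) F 0 / m ! * ∫ ω, τ ω ^ m ∂μ

theorem abs_meanTaylorRemainder_le {F : ℝ → ℝ} {s : Set ℝ} (hs : IsOpen s)
    (hIcc : Set.Icc (-(1 / 2)) (1 / 2) ⊆ s) {j n : ℕ} (hF : ContDiffOn ℝ (j + n : ℕ) F s) {M : ℝ}
    (hM : ∀ y, |y| ≤ 1 / 2 → |iteratedDeriv (j + n) F y| ≤ M) (hτ : Measurable τ)
    (hτb : ∀ ω, |τ ω| ≤ 1 / 2) :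
    |meanTaylorRemainder μ τ F j n| ≤ M / n ! * ∫ ω, |τ ω| ^ n ∂μ := by
  have hFj : ContDiffOn ℝ n (iteratedDeriv j F) s := hF.iteratedDeriv_of_isOpen hs
  have hpointwise : ∀ ω, |iteratedDeriv j F (τ ω)
      - ∑ m ∈ range n, iteratedDeriv (j + m) F 0 / m ! * τ ω ^ m| ≤ M / n ! * |τ ω| ^ n := by
    intro ω
    have hsub : uIcc 0 (τ ω) ⊆ Set.Icc (-(1 / 2)) (1 / 2) :=
      uIcc_subset_Icc ⟨by norm_num, by norm_num⟩ (abs_le.1 (hτb ω))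
    have h := abs_sub_taylor_le hs hFj (hsub.trans hIcc)
      fun y hy => by rw [iteratedDeriv_iteratedDeriv]; exact hM y (abs_le.2 (hsub hy))
    simp only [iteratedDeriv_iteratedDeriv, sub_zero] at h
    rwa [mul_div_right_comm] at h
  rw [meanTaylorRemainder, ← integral_sum_mul_pow hτ hτb, ← integral_sub, ← integral_const_mul]
  · exact norm_integral_le_of_norm_le
      ((integrable_comp_of_abs_le_half (g := fun x => |x| ^ n) (by fun_prop) hτ hτb).const_mul _)
      (.of_forall fun ω => (Real.norm_eq_abs _).trans_le (hpointwise ω))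
  · exact integrable_comp_of_abs_le_half ((hFj.continuousOn).mono hIcc) hτ hτb
  · exact integrable_comp_of_abs_le_half
      (g := fun x => ∑ m ∈ range n, iteratedDeriv (j + m) F 0 / m ! * x ^ m) (by fun_prop) hτ hτb

variable {K : ℕ} {F : ℝ → ℝ} {s : Set ℝ} {η : ℝ} {C B : ℕ → ℝ}

theorem integral_sum_unbiasingWeight_sub_eq (hs : IsOpen s)
    (hIcc : Set.Icc (-(1 / 2)) (1 / 2) ⊆ s) (hF : ContDiffOn ℝ (2 * K + 2 : ℕ) F s)
    (hτ : Measurable τ) (hτb : ∀ ω, |τ ω| ≤ 1 / 2) (hC0 : C 0 = 1)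
    (hme : ∀ i, i ≤ 2 * K + 2 → Even i → ∫ ω, τ ω ^ i ∂μ = C i * η ^ i)
    (hmo : ∀ i, i ≤ 2 * K + 2 → Odd i → ∫ ω, τ ω ^ i ∂μ = 0)
    (hrec : UnbiasingRecursion K C B) :
    ∫ ω, ∑ j ∈ range (K + 1), unbiasingWeight B j * η ^ (2 * j) * iteratedDeriv (2 * j) F (τ ω) ∂μ
        - F 0
      = ∑ j ∈ range (K + 1), unbiasingWeight B j * η ^ (2 * j)
          * meanTaylorRemainder μ τ F (2 * j) (2 * (K + 1 - j)) := by
  set D : ℕ → ℝ := fun i => iteratedDeriv i F 0 with hD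
  have hpoly : ∀ j ∈ range (K + 1),
      ∑ m ∈ range (2 * (K + 1 - j)), D (2 * j + m) / m ! * ∫ ω, τ ω ^ m ∂μ
        = ∑ p ∈ range (K + 1 - j), D (2 * (j + p)) * (C (2 * p) / (2 * p)!) * η ^ (2 * p) := by
    intro j hj
    rw [sum_range_two_mul_of_odd_eq_zero _ _ fun m hm hodd => by
      rw [hmo m (by omega) hodd, mul_zero]]
    refine sum_congr rfl fun p hp => ?_
    rw [hme (2 * p) (by simp at hj hp; omega) (even_two_mul p), mul_add]
    ring
  have hint : ∀ j ∈ range (K + 1), Integrable (fun ω => iteratedDeriv (2 * j) F (τ ω)) μ :=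
    fun j hj => integrable_comp_of_abs_le_half
      (((hF.of_le (by simp at hj; norm_cast; omega)).iteratedDeriv_of_isOpen
        (m := 0) hs).continuousOn.mono hIcc) hτ hτb
  rw [integral_finsetSum _ fun j hj => (hint j hj).const_mul _,
    ← show D 0 = F 0 by simp [D], ← sum_unbiasingWeight_mul_sum_eq hC0 hrec η D,
    ← sum_congr rfl fun j hj => congrArg (unbiasingWeight B j * η ^ (2 * j) * ·) (hpoly j hj),
    ← sum_sub_distrib]
  simp only [integral_const_mul, meanTaylorRemainder, mul_sub, hD]

theorem abs_integral_sum_unbiasingWeight_sub_le (hs : IsOpen s)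
    (hIcc : Set.Icc (-(1 / 2)) (1 / 2) ⊆ s) (hF : ContDiffOn ℝ (2 * K + 2 : ℕ) F s) {M : ℝ}
    (hM : ∀ y, |y| ≤ 1 / 2 → |iteratedDeriv (2 * K + 2) F y| ≤ M)
    (hτ : Measurable τ) (hτb : ∀ ω, |τ ω| ≤ 1 / 2) (hη : 0 ≤ η) (hC0 : C 0 = 1) (hB0 : B 0 = 1)
    (hme : ∀ i, i ≤ 2 * K + 2 → Even i → ∫ ω, τ ω ^ i ∂μ = C i * η ^ i)
    (hmo : ∀ i, i ≤ 2 * K + 2 → Odd i → ∫ ω, τ ω ^ i ∂μ = 0)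
    (hrec : UnbiasingRecursion K C B) {T E : ℝ} (hCT : ∀ i, i ≤ 2 * K + 2 → Even i → C i ≤ T ^ i)
    (hBE : ∀ i, i ≤ 2 * K → Even i → ∀ j, j ≤ 2 * K + 2 - i →
      T ^ j / (j.factorial : ℝ) * |B i| ≤ E ^ (i + j)) :
    |∫ ω, ∑ j ∈ range (K + 1), unbiasingWeight B j * η ^ (2 * j) * iteratedDeriv (2 * j) F (τ ω) ∂μ
        - F 0|
      ≤ (K + 1) * M * (E * η) ^ (2 * K + 2) := by
  have hM0 : 0 ≤ M := (abs_nonneg _).trans (hM 0 (by norm_num))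
  have hterm : ∀ j ∈ range (K + 1), |unbiasingWeight B j * η ^ (2 * j)
      * meanTaylorRemainder μ τ F (2 * j) (2 * (K + 1 - j))| ≤ M * (E * η) ^ (2 * K + 2) := by
    intro j hj
    have hjK : j ≤ K := by simp at hj; omega
    have hsum : 2 * j + 2 * (K + 1 - j) = 2 * K + 2 := by omega
    have hrem := abs_meanTaylorRemainder_le (μ := μ) hs hIcc (by rwa [hsum]) (by rwa [hsum]) hτ hτb
    simp only [(even_two_mul (K + 1 - j)).pow_abs] at hrem
    rw [hme _ (by omega) (even_two_mul _)] at hrem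
    calc _ = |unbiasingWeight B j| * η ^ (2 * j)
            * |meanTaylorRemainder μ τ F (2 * j) (2 * (K + 1 - j))| := by
          rw [abs_mul, abs_mul, abs_of_nonneg (pow_nonneg hη _)]
      _ ≤ |unbiasingWeight B j| * η ^ (2 * j) * (M / (2 * (K + 1 - j))!
            * (C (2 * (K + 1 - j)) * η ^ (2 * (K + 1 - j)))) := by gcongr
      _ = M * (|unbiasingWeight B j| * η ^ (2 * j) * (C (2 * (K + 1 - j)) / (2 * (K + 1 - j))!
            * η ^ (2 * (K + 1 - j)))) := by ring
      _ ≤ M * (E * η) ^ (2 * K + 2) := by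
          gcongr
          exact abs_unbiasingWeight_mul_le hη hB0 hCT hBE hjK
  rw [integral_sum_unbiasingWeight_sub_eq hs hIcc hF hτ hτb hC0 hme hmo hrec]
  calc _ ≤ _ := abs_sum_le_sum_abs _ _
    _ ≤ ∑ j ∈ range (K + 1), M * (E * η) ^ (2 * K + 2) := sum_le_sum hterm
    _ = (K + 1) * M * (E * η) ^ (2 * K + 2) := by simp [mul_assoc]

end Expectation

/-- STATEMENT 14, Taylor unbiasing bias bound.  There is an absolute constant `c` such
that for any even `k ≥ 2`, any `L ∈ C^{k+2}(0,∞)`, any bounded symmetric random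
variable `τ` with `|τ| ≤ 1/2`, `E[τⁱ] = Cᵢ ηⁱ` for even `i` (`C₂ = 1`, so `E[τ²] = η²`)
and vanishing odd moments, any unbiasing constants `B` satisfying the recursion
`Cᵢ/i! − B₂C_{i−2}/(i−2)! − ⋯ − B_{i−2}C₂/2! − Bᵢ = 0`, any `T ≥ max Cᵢ^{1/i}`,
`E ≥ max (Tʲ|Bᵢ|/j!)^{1/(i+j)}`, any envelopes `Λᵢ` for `|λⁱ L^{(i)}(λ)|` with ratio
bound `R` at scale `λ`, the estimator
`G_λ(τ) = F_λ(τ) − Σᵢ Bᵢ ηⁱ F_λ^{(i)}(τ)` with `F_λ(t) = L((1−t)λ)` satisfies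
`|E[G_λ(τ)] − L(λ)| ≤ c k R(λ) Λ_{k+2}(λ) (2Eη)^{k+2}`. -/
theorem stmt14 :
    ∃ c : ℝ, 0 < c ∧
      ∀ (Ω : Type) [MeasureSpace Ω], IsProbabilityMeasure (volume : Measure Ω) →
      ∀ (k : ℕ), Even k → 2 ≤ k →
      ∀ (L : ℝ → ℝ), ContDiffOn ℝ (k + 2) L (Set.Ioi 0) →
      ∀ (τ : Ω → ℝ), Measurable τ → (∀ ω, |τ ω| ≤ 1 / 2) →
      ∀ (η : ℝ), 0 ≤ η →
      ∀ (C B : ℕ → ℝ), C 0 = 1 → C 2 = 1 → B 0 = 1 →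
      (∀ i, i ≤ k + 2 → Even i → (∫ ω, (τ ω) ^ i) = C i * η ^ i) →
      (∀ i, i ≤ k + 2 → Odd i → (∫ ω, (τ ω) ^ i) = 0) →
      (∀ i, Even i → 2 ≤ i → i ≤ k →
        C i / (i.factorial : ℝ)
            - (∑ j ∈ Finset.Ico 1 (i / 2),
                B (2 * j) * C (i - 2 * j) / ((i - 2 * j).factorial : ℝ))
            - B i = 0) →
      ∀ (T E : ℝ), 1 ≤ T → 1 ≤ E →
      (∀ i, i ≤ k + 2 → Even i → C i ≤ T ^ i) →
      (∀ i, i ≤ k → Even i → ∀ j, j ≤ k + 2 - i →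
        T ^ j / (j.factorial : ℝ) * |B i| ≤ E ^ (i + j)) →
      ∀ (Λ : ℕ → ℝ → ℝ), (∀ i μ, 0 ≤ Λ i μ) →
      (∀ i, i ≤ k + 2 → ∀ μ : ℝ, 0 < μ → |μ ^ i * iteratedDeriv i L μ| ≤ Λ i μ) →
      ∀ (l : ℝ), 0 < l →
      ∀ (R : ℝ), 0 ≤ R →
      (∀ t : ℝ, |t| ≤ 1 / 2 → Λ (k + 2) ((1 - t) * l) ≤ R * Λ (k + 2) l) →
      |(∫ ω, ((fun s : ℝ => L ((1 - s) * l)) (τ ω)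
            - ∑ j ∈ Finset.Icc 1 (k / 2),
                B (2 * j) * η ^ (2 * j) *
                  iteratedDeriv (2 * j) (fun s : ℝ => L ((1 - s) * l)) (τ ω)))
          - L l|
        ≤ c * k * R * Λ (k + 2) l * (2 * E * η) ^ (k + 2) := by
  refine ⟨1, one_pos, ?_⟩
  intro Ω _ hprob k hk hk2 L hL τ hτ hτb η hη C B hC0 _ hB0 hme hmo hrec T E _ _ hCT hBE
    Λ hΛ0 hΛ l hl R hR hRΛ
  obtain ⟨K, rfl⟩ : ∃ K, k = 2 * K := hk.two_dvd
  have hL' : ContDiffOn ℝ (2 * K + 2 : ℕ) L (Ioi 0) := by exact_mod_cast hL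
  set F : ℝ → ℝ := fun s => L ((1 - s) * l)
  have hF : ContDiffOn ℝ (2 * K + 2 : ℕ) F (Iio 1) :=
    hL'.comp (by fun_prop) fun t ht => mul_pos (sub_pos.2 ht) hl
  have hM (y : ℝ) (hy : |y| ≤ 1 / 2) :
      |iteratedDeriv (2 * K + 2) F y| ≤ 2 ^ (2 * K + 2) * (R * Λ (2 * K + 2) l) :=
    (abs_iteratedDeriv_comp_one_sub_mul_le hL' hl (hΛ _ le_rfl) hy).trans
      (by gcongr; exact hRΛ y hy)
  have hbound := abs_integral_sum_unbiasingWeight_sub_le (μ := volume) isOpen_Iio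
    (fun y hy => show y < 1 by linarith [hy.2]) hF hM hτ hτb hη hC0 hB0 hme hmo hrec hCT hBE
  have hK : (K : ℝ) + 1 ≤ ((2 * K : ℕ) : ℝ) := by exact_mod_cast (by omega : K + 1 ≤ 2 * K)
  rw [Nat.mul_div_cancel_left K two_pos, show L l = F 0 by simp [F]]
  simp only [sub_sum_Icc_eq_sum_unbiasingWeight B η K F]
  refine hbound.trans ?_
  rw [mul_assoc 2 E, mul_pow 2, one_mul]
  calc _ ≤ ((2 * K : ℕ) : ℝ) * (2 ^ (2 * K + 2) * (R * Λ (2 * K + 2) l))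
        * (E * η) ^ (2 * K + 2) := by
        gcongr
        exact mul_nonneg (by positivity) (mul_nonneg hR (hΛ0 _ _))
    _ = _ := by ring
end
end
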